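/- arXiv:2411.02356 — 4 statements merged into one kernel-verified Lean document; each statement's English description precedes it below -/
import Mathlib

section
/- Let H : ℝ → ℝ be continuous, convex, and coercive, and let μ̂ be a minimizer of H. Define H⁻(μ) = H(μ) for μ ≤ μ̂ and H⁻(μ) = H(μ̂) for μ > μ̂. Then H⁻ is nonincreasing, convex, continuous, and satisfies H⁻ ≤ H with H⁻(μ) = max over λ ≤ 0 of (λμ - L(λ)), where L(λ) = sup_μ (λμ - H(μ)). -/
/-!
On `(-∞, μ̂]` a convex `H` has a supporting line of nonpositive slope `λ` at every point `μ`,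
and `λ μ - L λ = H μ` there, while `λ = 0` gives the constant value `H μ̂ = -L 0`. Conversely, for
`λ ≤ 0` the affine minorant `λ μ - L λ` is at most `λ μ' - L λ ≤ H μ'` with `μ' = min μ μ̂`. Hence
`H⁻ = H ∘ min (·, μ̂)` is the maximum of the affine functions `λ μ - L λ` with `λ ≤ 0`, which
makes it convex and nonincreasing.
-/

open Set

namespace ConvexOn

variable {S : Set ℝ} {f : ℝ → ℝ} {x : ℝ}

theorem add_leftDeriv_mul_sub_le (hf : ConvexOn ℝ S f) (hx : x ∈ interior S) {y : ℝ}
    (hy : y ∈ S) : f x + derivWithin f (Iio x) x * (y - x) ≤ f y := by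
  rcases lt_trichotomy y x with hyx | rfl | hxy
  · have hslope := hf.slope_le_leftDeriv_of_mem_interior hy hx hyx
    rw [slope_def_field, div_le_iff₀ (sub_pos.2 hyx)] at hslope
    linarith
  · simp
  · have hslope := (hf.leftDeriv_le_rightDeriv_of_mem_interior hx).trans
      (hf.rightDeriv_le_slope_of_mem_interior hx hy hxy)
    rw [slope_def_field, le_div_iff₀ (sub_pos.2 hxy)] at hslope
    linarith

theorem exists_nonpos_supporting_slope {m : ℝ} (hf : ConvexOn ℝ S f) (hm : m ∈ S)
    (hmin : IsMinOn f S m) (hx : x ∈ interior S) (hxm : x ≤ m) :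
    ∃ l ≤ (0 : ℝ), ∀ y ∈ S, f x + l * (y - x) ≤ f y := by
  rcases hxm.eq_or_lt with rfl | hxm
  · exact ⟨0, le_rfl, fun y hy => by simpa using hmin hy⟩
  refine ⟨derivWithin f (Iio x) x, ?_, fun y hy => hf.add_leftDeriv_mul_sub_le hx hy⟩
  calc derivWithin f (Iio x) x
      ≤ slope f x m := (hf.leftDeriv_le_rightDeriv_of_mem_interior hx).trans
        (hf.rightDeriv_le_slope_of_mem_interior hx hm hxm)
    _ ≤ 0 := by
      rw [slope_def_field]
      exact div_nonpos_of_nonpos_of_nonneg (sub_nonpos.2 (hmin (interior_subset hx)))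
        (sub_nonneg.2 hxm.le)

end ConvexOn

section SupOfAffine

variable {S : Set ℝ} {c g : ℝ → ℝ}

theorem convexOn_of_isGreatest_affine
    (hg : ∀ μ, IsGreatest {y | ∃ l ∈ S, y = l * μ - c l} (g μ)) :
    ConvexOn ℝ univ g := by
  refine ⟨convex_univ, fun x _ y _ a b ha hb hab => ?_⟩
  obtain ⟨l, hl, hmax⟩ := (hg (a • x + b • y)).1
  have hx : l * x - c l ≤ g x := (hg x).2 ⟨l, hl, rfl⟩
  have hy : l * y - c l ≤ g y := (hg y).2 ⟨l, hl, rfl⟩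
  rw [hmax, smul_eq_mul, smul_eq_mul, smul_eq_mul, smul_eq_mul]
  calc l * (a * x + b * y) - c l = a * (l * x - c l) + b * (l * y - c l) := by
        linear_combination c l * hab
    _ ≤ a * g x + b * g y := by gcongr

theorem antitone_of_isGreatest_affine (hS : S ⊆ Iic 0)
    (hg : ∀ μ, IsGreatest {y | ∃ l ∈ S, y = l * μ - c l} (g μ)) : Antitone g := by
  intro x y hxy
  obtain ⟨l, hl, hmax⟩ := (hg y).1
  have hx : l * x - c l ≤ g x := (hg x).2 ⟨l, hl, rfl⟩
  have : l * y ≤ l * x := mul_le_mul_of_nonpos_left hxy (hS hl)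
  linarith

end SupOfAffine

section LegendreTransform

variable {H L : ℝ → ℝ}

theorem legendre_eq_of_supporting {l x : ℝ} (hL : IsLUB {y | ∃ μ : ℝ, y = l * μ - H μ} (L l))
    (hsupp : ∀ y, H x + l * (y - x) ≤ H y) : L l = l * x - H x :=
  hL.unique <| IsGreatest.isLUB ⟨⟨x, rfl⟩, by rintro _ ⟨y, rfl⟩; linarith [hsupp y]⟩

theorem isGreatest_legendre_nonpos_comp_min {μh : ℝ} (hconv : ConvexOn ℝ univ H)
    (hμh : ∀ μ : ℝ, H μh ≤ H μ) (hL : ∀ l : ℝ, IsLUB {y | ∃ μ : ℝ, y = l * μ - H μ} (L l))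
    (μ : ℝ) : IsGreatest {y | ∃ l ∈ Iic (0 : ℝ), y = l * μ - L l} (H (min μ μh)) := by
  constructor
  · rcases le_or_gt μ μh with h | h
    · obtain ⟨l, hl, hsupp⟩ := hconv.exists_nonpos_supporting_slope (mem_univ μh)
        (fun y _ => hμh y) (by simp) h
      refine ⟨l, hl, ?_⟩
      rw [min_eq_left h, legendre_eq_of_supporting (hL l) (fun y => hsupp y (mem_univ y))]
      ring
    · refine ⟨0, mem_Iic.2 le_rfl, ?_⟩
      rw [min_eq_right h.le, legendre_eq_of_supporting (hL 0) (fun y => by simpa using hμh y)]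
      ring
  · rintro _ ⟨l, hl, rfl⟩
    have hconj : l * min μ μh - H (min μ μh) ≤ L l := (hL l).1 ⟨min μ μh, rfl⟩
    have : l * μ ≤ l * min μ μh := mul_le_mul_of_nonpos_left (min_le_left μ μh) hl
    linarith

end LegendreTransform

theorem stmt_6_general (H : ℝ → ℝ) (hcont : Continuous H)
    (hconv : ConvexOn ℝ Set.univ H)
    (μh : ℝ) (hμh : ∀ μ : ℝ, H μh ≤ H μ)
    (Hm : ℝ → ℝ) (hHm : ∀ μ : ℝ, Hm μ = if μ ≤ μh then H μ else H μh)
    (L : ℝ → ℝ)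
    (hL : ∀ l : ℝ, IsLUB {y | ∃ μ : ℝ, y = l * μ - H μ} (L l)) :
    Antitone Hm ∧ ConvexOn ℝ Set.univ Hm ∧ Continuous Hm ∧
    (∀ μ : ℝ, Hm μ ≤ H μ) ∧
    (∀ μ : ℝ, IsGreatest {y | ∃ l ≤ (0 : ℝ), y = l * μ - L l} (Hm μ)) := by
  have hle : ∀ μ, Hm μ ≤ H μ := fun μ => by
    rw [hHm]
    split_ifs
    exacts [le_rfl, hμh μ]
  have hHm_eq : Hm = fun μ => H (min μ μh) := by
    ext μ
    rw [hHm, min_def, apply_ite H]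
  subst hHm_eq
  have hsup := isGreatest_legendre_nonpos_comp_min hconv hμh hL
  exact ⟨antitone_of_isGreatest_affine subset_rfl hsup, convexOn_of_isGreatest_affine hsup,
    hcont.comp (continuous_id.min continuous_const), hle, hsup⟩

/-- Properties of the nonincreasing truncation `H⁻` of a continuous, convex,
superlinearly coercive Hamiltonian at a minimizer. -/
theorem stmt_6 (H : ℝ → ℝ) (hcont : Continuous H)
    (hconv : ConvexOn ℝ Set.univ H)
    (hcoer : Filter.Tendsto (fun μ => H μ / |μ|) (Filter.cocompact ℝ) Filter.atTop)
    (μh : ℝ) (hμh : ∀ μ : ℝ, H μh ≤ H μ)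
    (Hm : ℝ → ℝ) (hHm : ∀ μ : ℝ, Hm μ = if μ ≤ μh then H μ else H μh)
    (L : ℝ → ℝ)
    (hL : ∀ l : ℝ, IsLUB {y | ∃ μ : ℝ, y = l * μ - H μ} (L l)) :
    Antitone Hm ∧ ConvexOn ℝ Set.univ Hm ∧ Continuous Hm ∧
    (∀ μ : ℝ, Hm μ ≤ H μ) ∧
    (∀ μ : ℝ, IsGreatest {y | ∃ l ≤ (0 : ℝ), y = l * μ - L l} (Hm μ)) :=
  stmt_6_general H hcont hconv μh hμh Hm hHm L hL
end

section
/- Under the above definition of S, if f is ℓ-Lipschitz on the partition points (hence its interpolant I[f] is ℓ-Lipschitz), and L(s, λ) = +∞ for |λ| > β₀ while |L(s, λ)| ≤ M for |λ| ≤ β₀, then for each partition point s, |S[f](s) - f(s)| ≤ (ℓ·β₀ + M)·Δt. -/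
/-!
The control `λ = 0` is admissible, so `S[f](s) ≤ f(s) + Δt·L(s, 0) ≤ f(s) + M·Δt`. Conversely, a
minimising control moves the foot point `s - Δt·λ` by at most `β₀·Δt`, so the Lipschitz bound on
`I[f]` and `|L| ≤ M` give `S[f](s) ≥ f(s) - (ℓ·β₀ + M)·Δt`.
-/

open Set

lemma sub_mul_mem_Icc_iff {p L Δt l : ℝ} (hΔt : 0 < Δt) :
    p - Δt * l ∈ Icc 0 L ↔ l ∈ Icc ((p - L) / Δt) (p / Δt) := by
  simp only [mem_Icc, div_le_iff₀ hΔt, le_div_iff₀ hΔt]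
  constructor <;> rintro ⟨h₁, h₂⟩ <;> constructor <;> linarith

/-- The convention `L(s, λ) = +∞` for `|λ| > β` is encoded by restricting the controls to
`|l| ≤ β`. -/
def semiLagrangianValues (g c : ℝ → ℝ) (A : Set ℝ) (p Δt β : ℝ) : Set ℝ :=
  {y | ∃ l ∈ A, |l| ≤ β ∧ y = g (p - Δt * l) + Δt * c l}

section

variable {g c : ℝ → ℝ} {A s : Set ℝ} {p Δt β ℓ M : ℝ}

lemma add_mem_semiLagrangianValues_zero (h0 : 0 ∈ A) (hβ : 0 ≤ β) :
    g p + Δt * c 0 ∈ semiLagrangianValues g c A p Δt β :=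
  ⟨0, h0, by simpa using hβ, by simp⟩

lemma sub_le_of_mem_semiLagrangianValues (hΔt : 0 ≤ Δt) (hℓ : 0 ≤ ℓ) (hp : p ∈ s)
    (hA : ∀ l ∈ A, p - Δt * l ∈ s) (hg : ∀ x ∈ s, ∀ y ∈ s, |g x - g y| ≤ ℓ * |x - y|)
    (hc : ∀ l, |l| ≤ β → |c l| ≤ M) {y : ℝ} (hy : y ∈ semiLagrangianValues g c A p Δt β) :
    g p - (ℓ * β + M) * Δt ≤ y := by
  obtain ⟨l, hlA, hlβ, rfl⟩ := hy
  have hshift : |p - Δt * l - p| ≤ Δt * β := by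
    rw [sub_sub_cancel_left, abs_neg, abs_mul, abs_of_nonneg hΔt]
    exact mul_le_mul_of_nonneg_left hlβ hΔt
  have hgl : |g (p - Δt * l) - g p| ≤ ℓ * (Δt * β) :=
    (hg _ (hA l hlA) p hp).trans (mul_le_mul_of_nonneg_left hshift hℓ)
  have hcl : Δt * -M ≤ Δt * c l := mul_le_mul_of_nonneg_left (neg_le_of_abs_le (hc l hlβ)) hΔt
  linarith [neg_abs_le (g (p - Δt * l) - g p)]

theorem abs_sub_le_of_isLeast_semiLagrangianValues (hΔt : 0 ≤ Δt) (hℓ : 0 ≤ ℓ) (hp : p ∈ s)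
    (h0 : 0 ∈ A) (hA : ∀ l ∈ A, p - Δt * l ∈ s)
    (hg : ∀ x ∈ s, ∀ y ∈ s, |g x - g y| ≤ ℓ * |x - y|) (hc : ∀ l, |l| ≤ β → |c l| ≤ M)
    {S : ℝ} (hS : IsLeast (semiLagrangianValues g c A p Δt β) S) :
    |S - g p| ≤ (ℓ * β + M) * Δt := by
  obtain ⟨l, -, hlβ, -⟩ := hS.1
  have hβ : 0 ≤ β := (abs_nonneg l).trans hlβ
  have hc0 : Δt * c 0 ≤ Δt * M :=
    mul_le_mul_of_nonneg_left (le_of_abs_le (hc 0 (by simpa using hβ))) hΔt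
  have hupper : S ≤ g p + Δt * c 0 := hS.2 (add_mem_semiLagrangianValues_zero h0 hβ)
  have hlower := sub_le_of_mem_semiLagrangianValues hΔt hℓ hp hA hg hc hS.1
  rw [abs_sub_le_iff]
  constructor
  · linarith [mul_nonneg (mul_nonneg hℓ hβ) hΔt]
  · linarith

end

theorem stmt_10_general (L₀ Δt β₀ ℓ M : ℝ) (hΔt : 0 < Δt)
    (hℓ : 0 < ℓ)
    (f If : ℝ → ℝ) (p : ℝ) (hp : p ∈ Set.Icc (0 : ℝ) L₀)
    (hIfp : If p = f p)
    (hIfLip : ∀ x ∈ Set.Icc (0 : ℝ) L₀, ∀ y ∈ Set.Icc (0 : ℝ) L₀,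
      |If x - If y| ≤ ℓ * |x - y|)
    (Lag : ℝ → ℝ) (hLagM : ∀ l : ℝ, |l| ≤ β₀ → |Lag l| ≤ M)
    (Sf : ℝ)
    (hSf : IsLeast {y | ∃ l : ℝ, l ∈ Set.Icc ((p - L₀) / Δt) (p / Δt) ∧ |l| ≤ β₀ ∧
      y = If (p - Δt * l) + Δt * Lag l} Sf) :
    |Sf - f p| ≤ (ℓ * β₀ + M) * Δt := by
  have h0 : (0 : ℝ) ∈ Icc ((p - L₀) / Δt) (p / Δt) :=
    (sub_mul_mem_Icc_iff hΔt).1 (by simpa using hp)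
  rw [← hIfp]
  exact abs_sub_le_of_isLeast_semiLagrangianValues hΔt.le hℓ.le hp h0
    (fun l hl => (sub_mul_mem_Icc_iff hΔt).2 hl) hIfLip hLagM hSf

/-- Stability estimate for one step of the semi-Lagrangian operator applied to
a Lipschitz datum. -/
theorem stmt_10 (L₀ Δt β₀ ℓ M : ℝ) (hL₀ : 0 < L₀) (hΔt : 0 < Δt) (hβ₀ : 0 < β₀)
    (hℓ : 0 < ℓ) (hM : 0 < M) (hΔtL : Δt ≤ L₀ / β₀)
    (f If : ℝ → ℝ) (p : ℝ) (hp : p ∈ Set.Icc (0 : ℝ) L₀)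
    (hIfp : If p = f p)
    (hIfLip : ∀ x ∈ Set.Icc (0 : ℝ) L₀, ∀ y ∈ Set.Icc (0 : ℝ) L₀,
      |If x - If y| ≤ ℓ * |x - y|)
    (Lag : ℝ → ℝ) (hLagM : ∀ l : ℝ, |l| ≤ β₀ → |Lag l| ≤ M)
    (Sf : ℝ)
    (hSf : IsLeast {y | ∃ l : ℝ, l ∈ Set.Icc ((p - L₀) / Δt) (p / Δt) ∧ |l| ≤ β₀ ∧
      y = If (p - Δt * l) + Δt * Lag l} Sf) :
    |Sf - f p| ≤ (ℓ * β₀ + M) * Δt :=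
  stmt_10_general L₀ Δt β₀ ℓ M hΔt hℓ f If p hp hIfp hIfLip Lag hLagM Sf hSf
end

section
/- Let φ : [0, L₀] → ℝ be C² with ‖φ''‖_∞ ≤ M, let H(s, μ) = max over |λ| ≤ β₀ of (λμ - L(s, λ)), and suppose Δt ≤ Δx/β₀ where Δx is the minimal spacing of the partition, and s is an interior partition point (so [-β₀, β₀] ⊆ [(s - L₀)/Δt, s/Δt]). Then |(φ(s) - S[φ](s))/Δt - H(s, φ'(s))| ≤ C₀ · M · min{Δx, Δx²/Δt}, where C₀ is an absolute constant and S[φ](s) = min over λ in [(s-L₀)/Δt, s/Δt] of (I[φ](s - Δt·λ) + Δt·L(s, λ)). -/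
/-!
For each admissible slope `l`, the difference quotient `(φ p - Iφ (p - Δt * l)) / Δt` differs
from `l * φ' p` by the interpolation error plus the first-order Taylor remainder of `φ` at `p`,
both divided by `Δt`. Under `β₀ * Δt ≤ Δx` the two errors are `O(M * min (Δx * Δt) (Δx ^ 2))`.
The Lagrangian terms of the discrete minimum `Sval` and of the maximum `Hval` cancel slope by
slope, so a bound uniform in `l` passes to the optimal values.
-/

open Set

section Taylor

variable {φ φ' φ'' : ℝ → ℝ} {s : Set ℝ} {M : ℝ}

theorem abs_sub_le_of_abs_deriv_le (hs : Convex ℝ s)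
    (hφ : ∀ x ∈ s, HasDerivWithinAt φ (φ' x) s x) (hM : ∀ x ∈ s, |φ' x| ≤ M)
    {x y : ℝ} (hx : x ∈ s) (hy : y ∈ s) : |φ y - φ x| ≤ M * |y - x| := by
  simpa only [Real.norm_eq_abs] using
    hs.norm_image_sub_le_of_norm_hasDerivWithin_le hφ (by simpa only [Real.norm_eq_abs]) hx hy

theorem abs_sub_sub_mul_deriv_le (hs : Convex ℝ s)
    (hφ : ∀ x ∈ s, HasDerivWithinAt φ (φ' x) s x)
    (hφ' : ∀ x ∈ s, HasDerivWithinAt φ' (φ'' x) s x) (hM : ∀ x ∈ s, |φ'' x| ≤ M)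
    {p x : ℝ} (hp : p ∈ s) (hx : x ∈ s) :
    |φ x - φ p - (x - p) * φ' p| ≤ M * (x - p) ^ 2 := by
  have hpx : uIcc p x ⊆ s := hs.ordConnected.uIcc_subset hp hx
  have hM0 : 0 ≤ M := (abs_nonneg _).trans (hM p hp)
  have hderiv : ∀ z ∈ uIcc p x, HasDerivWithinAt (fun z => φ z - z * φ' p)
      (φ' z - φ' p) (uIcc p x) z := fun z hz =>
    ((hφ z (hpx hz)).mono hpx).sub (by simpa using (hasDerivWithinAt_id z _).mul_const (φ' p))
  have hbound : ∀ z ∈ uIcc p x, |φ' z - φ' p| ≤ M * |x - p| := fun z hz =>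
    (abs_sub_le_of_abs_deriv_le hs hφ' hM hp (hpx hz)).trans
      (mul_le_mul_of_nonneg_left (abs_sub_left_of_mem_uIcc hz) hM0)
  have key :=
    abs_sub_le_of_abs_deriv_le (convex_uIcc p x) hderiv hbound left_mem_uIcc right_mem_uIcc
  calc |φ x - φ p - (x - p) * φ' p|
      = |φ x - x * φ' p - (φ p - p * φ' p)| := by ring_nf
    _ ≤ M * |x - p| * |x - p| := key
    _ = M * (x - p) ^ 2 := by rw [mul_assoc, abs_mul_abs_self, sq]

end Taylor

theorem abs_sub_div_sub_le_of_isLeast_of_isGreatest {α : Type*} {K : Set α} {F G : α → ℝ}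
    {c t S H ε : ℝ} (ht : 0 < t) (hS : IsLeast (F '' K) S) (hH : IsGreatest (G '' K) H)
    (h : ∀ x ∈ K, |(c - F x) / t - G x| ≤ ε) : |(c - S) / t - H| ≤ ε := by
  obtain ⟨⟨x₀, hx₀, rfl⟩, hS⟩ := hS
  obtain ⟨⟨x₁, hx₁, rfl⟩, hH⟩ := hH
  have hHx₀ : G x₀ ≤ G x₁ := hH (mem_image_of_mem G hx₀)
  have hSx₁ : (c - F x₁) / t ≤ (c - F x₀) / t :=
    div_le_div_of_nonneg_right (by linarith [hS (mem_image_of_mem F hx₁)]) ht.le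
  have h₀ := abs_le.mp (h x₀ hx₀)
  have h₁ := abs_le.mp (h x₁ hx₁)
  rw [abs_le]
  constructor <;> linarith

theorem min_mul_le_mul_min {a b β : ℝ} (ha : 0 ≤ a) (hb : 0 ≤ b) (hβ : 0 ≤ β) :
    min (a * β) b ≤ (β + 1) * min a b := by
  rw [mul_min_of_nonneg _ _ (by linarith)]
  exact min_le_min (by nlinarith) (by nlinarith)

theorem consistency_error_le {Δx Δt M β₀ : ℝ} (hΔt : 0 < Δt) (hM : 0 ≤ M) (hβ₀ : 0 ≤ β₀)
    (hcfl : β₀ * Δt ≤ Δx) :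
    ((1 / 8) * M * min (Δx * Δt * β₀) (Δx ^ 2) + M * (β₀ * Δt) ^ 2) / Δt ≤
      2 * (β₀ + 1) * M * min Δx (Δx ^ 2 / Δt) := by
  have hβΔt : 0 ≤ β₀ * Δt := mul_nonneg hβ₀ hΔt.le
  have hΔx : 0 ≤ Δx := hβΔt.trans hcfl
  have hmin : Δt * min Δx (Δx ^ 2 / Δt) = min (Δx * Δt) (Δx ^ 2) := by
    rw [mul_min_of_nonneg _ _ hΔt.le, mul_div_cancel₀ _ hΔt.ne', mul_comm]
  have hsq : (β₀ * Δt) ^ 2 ≤ min (Δx * Δt * β₀) (Δx ^ 2) :=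
    le_min (by nlinarith [mul_le_mul_of_nonneg_left hcfl hβΔt])
      (pow_le_pow_left₀ hβΔt hcfl 2)
  have hinterp := min_mul_le_mul_min (mul_nonneg hΔx hΔt.le) (sq_nonneg Δx) hβ₀
  rw [div_le_iff₀ hΔt]
  calc _ ≤ 2 * (β₀ + 1) * M * (Δt * min Δx (Δx ^ 2 / Δt)) := by rw [hmin]; nlinarith
    _ = _ := by ring

theorem Icc_neg_subset_Icc_div {β₀ L₀ Δt p : ℝ} (hΔt : 0 < Δt)
    (hp : p ∈ Icc (β₀ * Δt) (L₀ - β₀ * Δt)) :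
    Icc (-β₀) β₀ ⊆ Icc ((p - L₀) / Δt) (p / Δt) := by
  intro l ⟨hl₁, hl₂⟩
  rw [mem_Icc, div_le_iff₀ hΔt, le_div_iff₀ hΔt]
  constructor <;> nlinarith [hp.1, hp.2]

theorem abs_div_sub_mul_deriv_le {L₀ β₀ M Δt ε p l : ℝ} {φ φ' φ'' Iφ : ℝ → ℝ}
    (hφ : ∀ x ∈ Icc 0 L₀, HasDerivWithinAt φ (φ' x) (Icc 0 L₀) x)
    (hφ' : ∀ x ∈ Icc 0 L₀, HasDerivWithinAt φ' (φ'' x) (Icc 0 L₀) x)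
    (hφ'' : ∀ x ∈ Icc 0 L₀, |φ'' x| ≤ M) (hΔt : 0 < Δt)
    (hp : p ∈ Icc (β₀ * Δt) (L₀ - β₀ * Δt)) (hl : l ∈ Icc (-β₀) β₀)
    (hI : ∀ y ∈ Icc (p - β₀ * Δt) (p + β₀ * Δt), |Iφ y - φ y| ≤ ε) :
    |(φ p - Iφ (p - Δt * l)) / Δt - l * φ' p| ≤ (ε + M * (β₀ * Δt) ^ 2) / Δt := by
  have hβΔt : 0 ≤ β₀ * Δt := mul_nonneg (by linarith [hl.1, hl.2]) hΔt.le
  have hl' : |Δt * l| ≤ β₀ * Δt := by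
    rw [abs_mul, abs_of_pos hΔt, mul_comm]
    exact mul_le_mul_of_nonneg_right (abs_le.mpr hl) hΔt.le
  have hq : p - Δt * l ∈ Icc (p - β₀ * Δt) (p + β₀ * Δt) := by
    constructor <;> linarith [(abs_le.mp hl').1, (abs_le.mp hl').2]
  have hdom : Icc (p - β₀ * Δt) (p + β₀ * Δt) ⊆ Icc 0 L₀ := fun y ⟨hy₁, hy₂⟩ =>
    ⟨by linarith [hp.1], by linarith [hp.2]⟩
  have hpdom : p ∈ Icc 0 L₀ := hdom ⟨by linarith, by linarith⟩
  have hT := abs_sub_sub_mul_deriv_le (convex_Icc 0 L₀) hφ hφ' hφ'' hpdom (hdom hq)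
  have hρ : M * (p - Δt * l - p) ^ 2 ≤ M * (β₀ * Δt) ^ 2 := by
    refine mul_le_mul_of_nonneg_left ?_ ((abs_nonneg _).trans (hφ'' p hpdom))
    rw [sub_sub_cancel_left, neg_sq, ← sq_abs]
    exact pow_le_pow_left₀ (abs_nonneg _) hl' 2
  have hsplit : (φ p - Iφ (p - Δt * l)) / Δt - l * φ' p =
      (-(Iφ (p - Δt * l) - φ (p - Δt * l)) -
        (φ (p - Δt * l) - φ p - (p - Δt * l - p) * φ' p)) / Δt := by
    field_simp
    ring
  rw [hsplit, abs_div, abs_of_pos hΔt]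
  gcongr
  exact (abs_sub _ _).trans (by rw [abs_neg]; linarith [hI _ hq])

theorem stmt_11_general (L₀ β₀ : ℝ) (hβ₀ : 0 < β₀) :
    ∃ C₀ > (0 : ℝ), ∀ (Δx Δt M : ℝ) (φ φ' φ'' Iφ : ℝ → ℝ) (Lag : ℝ → ℝ)
      (p Hval Sval : ℝ),
      0 < Δx → 0 < Δt → 0 ≤ M →
      Δt ≤ Δx / β₀ →
      p ∈ Set.Icc (β₀ * Δt) (L₀ - β₀ * Δt) →
      (∀ x ∈ Set.Icc (0 : ℝ) L₀, HasDerivWithinAt φ (φ' x) (Set.Icc (0 : ℝ) L₀) x) →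
      (∀ x ∈ Set.Icc (0 : ℝ) L₀, HasDerivWithinAt φ' (φ'' x) (Set.Icc (0 : ℝ) L₀) x) →
      (∀ x ∈ Set.Icc (0 : ℝ) L₀, |φ'' x| ≤ M) →
      (∀ y ∈ Set.Icc (p - β₀ * Δt) (p + β₀ * Δt),
        |Iφ y - φ y| ≤ (1 / 8) * M * min (Δx * Δt * β₀) (Δx ^ 2)) →
      IsGreatest {y | ∃ l ∈ Set.Icc (-β₀) β₀, y = l * φ' p - Lag l} Hval →
      IsLeast {y | ∃ l : ℝ, l ∈ Set.Icc ((p - L₀) / Δt) (p / Δt) ∧ |l| ≤ β₀ ∧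
        y = Iφ (p - Δt * l) + Δt * Lag l} Sval →
      |(φ p - Sval) / Δt - Hval| ≤ C₀ * M * min Δx (Δx ^ 2 / Δt) := by
  refine ⟨2 * (β₀ + 1), by positivity, ?_⟩
  intro Δx Δt M φ φ' φ'' Iφ Lag p Hval Sval _ hΔt hM hcfl hp hφ hφ' hφ'' hI hH hS
  have hK := Icc_neg_subset_Icc_div hΔt hp
  have hS' : IsLeast ((fun l => Iφ (p - Δt * l) + Δt * Lag l) '' Icc (-β₀) β₀) Sval := by
    convert hS using 1
    ext y
    simp only [mem_image, mem_ofPred_eq, abs_le, ← mem_Icc]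
    exact exists_congr fun l => ⟨fun ⟨hl, hy⟩ => ⟨hK hl, hl, hy.symm⟩,
      fun ⟨_, hl, hy⟩ => ⟨hl, hy.symm⟩⟩
  have hH' : IsGreatest ((fun l => l * φ' p - Lag l) '' Icc (-β₀) β₀) Hval := by
    convert hH using 1
    ext y
    simp only [mem_image, mem_ofPred_eq, eq_comm]
  refine (abs_sub_div_sub_le_of_isLeast_of_isGreatest hΔt hS' hH' fun l hl => ?_).trans
    (consistency_error_le hΔt hM hβ₀.le ((le_div_iff₀ hβ₀).mp hcfl |>.trans_eq' (mul_comm _ _)))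
  convert abs_div_sub_mul_deriv_le hφ hφ' hφ'' hΔt hp hl hI using 2
  field_simp
  ring

/-- Consistency estimate for the semi-Lagrangian operator at an interior grid
point, under the time step restriction `Δt ≤ Δx / β₀`. -/
theorem stmt_11 (L₀ β₀ : ℝ) (hL₀ : 0 < L₀) (hβ₀ : 0 < β₀) :
    ∃ C₀ > (0 : ℝ), ∀ (Δx Δt M : ℝ) (φ φ' φ'' Iφ : ℝ → ℝ) (Lag : ℝ → ℝ)
      (p Hval Sval : ℝ),
      0 < Δx → 0 < Δt → 0 ≤ M →
      Δt ≤ Δx / β₀ →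
      p ∈ Set.Icc (β₀ * Δt) (L₀ - β₀ * Δt) →
      (∀ x ∈ Set.Icc (0 : ℝ) L₀, HasDerivWithinAt φ (φ' x) (Set.Icc (0 : ℝ) L₀) x) →
      (∀ x ∈ Set.Icc (0 : ℝ) L₀, HasDerivWithinAt φ' (φ'' x) (Set.Icc (0 : ℝ) L₀) x) →
      (∀ x ∈ Set.Icc (0 : ℝ) L₀, |φ'' x| ≤ M) →
      (∀ y ∈ Set.Icc (p - β₀ * Δt) (p + β₀ * Δt),
        |Iφ y - φ y| ≤ (1 / 8) * M * min (Δx * Δt * β₀) (Δx ^ 2)) →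
      IsGreatest {y | ∃ l ∈ Set.Icc (-β₀) β₀, y = l * φ' p - Lag l} Hval →
      IsLeast {y | ∃ l : ℝ, l ∈ Set.Icc ((p - L₀) / Δt) (p / Δt) ∧ |l| ≤ β₀ ∧
        y = Iφ (p - Δt * l) + Δt * Lag l} Sval →
      |(φ p - Sval) / Δt - Hval| ≤ C₀ * M * min Δx (Δx ^ 2 / Δt) :=
  stmt_11_general L₀ β₀ hβ₀
end

section
/- For the one-sided consistency at a boundary point: with s = 0 a partition endpoint and Δt ≤ L₀/β₀, the operator S[φ](0) = min over λ ∈ [-L₀/Δt, 0] of (I[φ](-Δt·λ) + Δt·L(0, λ)) satisfies |(φ(0) - S[φ](0))/Δt - H⁻(0, φ'(0))| ≤ C₀·M·min{Δx, Δx²/Δt}, where H⁻(0, μ) = max over λ ∈ [-β₀, 0] of (λμ - L(0, λ)). -/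
/-! For a control `λ ∈ [-β₀, 0]` the foot point `y = -Δt λ` lies in `[0, β₀ Δt]`, and
`(φ 0 - I[φ] y - Δt L(0, λ)) / Δt - (λ φ'(0) - L(0, λ))` is minus the sum of the interpolation
error `I[φ] y - φ y` and the Taylor remainder `φ y - φ 0 - y φ'(0)`, divided by `Δt`. As
`β₀ Δt ≤ Δx`, both are `O(M min(β₀ Δt Δx, Δx²)) = O(Δt M min(Δx, Δx²/Δt))`. Since
`Δt ≤ L₀ / β₀`, the minimisation defining `S[φ](0)` runs over the same controls `[-β₀, 0]` as the
maximisation defining `H⁻`, and a uniform bound on the difference of two functions on a common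
set bounds the difference of their maxima. -/

open Set

theorem abs_sub_sub_mul_deriv_le_of_abs_deriv2_le {f f' f'' : ℝ → ℝ} {a b M : ℝ}
    (hf : ∀ x ∈ Icc a b, HasDerivWithinAt f (f' x) (Icc a b) x)
    (hf' : ∀ x ∈ Icc a b, HasDerivWithinAt f' (f'' x) (Icc a b) x)
    (hf'' : ∀ x ∈ Icc a b, |f'' x| ≤ M) {y : ℝ} (hy : y ∈ Icc a b) :
    |f y - f a - (y - a) * f' a| ≤ M * (y - a) ^ 2 := by
  have ha : a ∈ Icc a y := left_mem_Icc.mpr hy.1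
  have hsub : Icc a y ⊆ Icc a b := Icc_subset_Icc_right hy.2
  have hlip : ∀ x ∈ Icc a y, ‖f' x - f' a‖ ≤ M * (y - a) := fun x hx => by
    have := (convex_Icc a b).norm_image_sub_le_of_norm_hasDerivWithin_le hf' hf''
      (hsub ha) (hsub hx)
    rw [Real.norm_eq_abs, Real.norm_eq_abs, abs_of_nonneg (sub_nonneg.mpr hx.1)] at this
    have hM : 0 ≤ M := (abs_nonneg _).trans (hf'' a (hsub ha))
    exact this.trans (mul_le_mul_of_nonneg_left (by linarith [hx.2]) hM)
  have hderiv : ∀ x ∈ Icc a y, HasDerivWithinAt (fun z => f z - f a - (z - a) * f' a)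
      (f' x - f' a) (Icc a y) x := fun x hx => by
    simpa using (((hf x (hsub hx)).mono hsub).sub_const (f a)).fun_sub
      (((hasDerivWithinAt_id x _).sub_const a).mul_const (f' a))
  have := (convex_Icc a y).norm_image_sub_le_of_norm_hasDerivWithin_le hderiv hlip ha
    (right_mem_Icc.mpr hy.1)
  simpa [Real.norm_eq_abs, abs_of_nonneg (sub_nonneg.mpr hy.1), sq, mul_assoc] using this

theorem min_mul_le_add_one_mul_min {a b c : ℝ} (ha : 0 ≤ a) (hb : 0 ≤ b) (hc : 0 ≤ c) :
    min (c * a) b ≤ (c + 1) * min a b := by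
  rw [mul_min_of_nonneg _ _ (by linarith)]
  exact min_le_min (by nlinarith) (by nlinarith)

theorem abs_sub_le_of_isGreatest_image {α : Type*} {K : Set α} {f h : α → ℝ} {F H ε : ℝ}
    (hF : IsGreatest (f '' K) F) (hH : IsGreatest (h '' K) H)
    (hfh : ∀ l ∈ K, |f l - h l| ≤ ε) : |F - H| ≤ ε := by
  obtain ⟨⟨lF, hlF, rfl⟩, hFub⟩ := hF
  obtain ⟨⟨lH, hlH, rfl⟩, hHub⟩ := hH
  have h₁ := abs_le.mp (hfh lF hlF)
  have h₂ := abs_le.mp (hfh lH hlH)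
  have := hFub (mem_image_of_mem f hlH)
  have := hHub (mem_image_of_mem h hlF)
  exact abs_le.mpr ⟨by linarith, by linarith⟩

theorem le_add_one_mul_mul_min_div_of_le_min {Δx Δt β₀ u : ℝ} (hΔx : 0 ≤ Δx) (hΔt : 0 < Δt)
    (hβ₀ : 0 ≤ β₀) (hu : u ≤ min (β₀ * (Δt * Δx)) (Δx ^ 2)) :
    u ≤ (β₀ + 1) * (Δt * min Δx (Δx ^ 2 / Δt)) := by
  rw [mul_min_of_nonneg _ _ hΔt.le, mul_div_cancel₀ _ hΔt.ne']
  exact hu.trans (min_mul_le_add_one_mul_min (by positivity) (by positivity) hβ₀)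

theorem abs_div_sub_le_of_abs_add_abs_le {a b i p c Δt l E : ℝ} (hΔt : 0 < Δt)
    (h : |i - b| + |b - a - (0 - Δt * l) * p| ≤ Δt * E) :
    |(a - (i + Δt * c)) / Δt - (l * p - c)| ≤ E := by
  have hsplit : (a - (i + Δt * c)) / Δt - (l * p - c)
      = -((i - b) + (b - a - (0 - Δt * l) * p)) / Δt := by
    field_simp
    ring
  rw [hsplit, abs_div, abs_neg, abs_of_pos hΔt, div_le_iff₀ hΔt, mul_comm E]
  exact (abs_add_le _ _).trans h

theorem abs_scheme_quotient_sub_le {φ φ' φ'' Iφ Lag : ℝ → ℝ} {Δx Δt β₀ M l : ℝ}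
    (hΔx : 0 ≤ Δx) (hΔt : 0 < Δt) (hβ₀ : 0 ≤ β₀) (hM : 0 ≤ M) (hβx : β₀ * Δt ≤ Δx)
    (hφ : ∀ x ∈ Icc 0 (β₀ * Δt), HasDerivWithinAt φ (φ' x) (Icc 0 (β₀ * Δt)) x)
    (hφ' : ∀ x ∈ Icc 0 (β₀ * Δt), HasDerivWithinAt φ' (φ'' x) (Icc 0 (β₀ * Δt)) x)
    (hφ'' : ∀ x ∈ Icc 0 (β₀ * Δt), |φ'' x| ≤ M)
    (hIφ : ∀ y ∈ Icc 0 (β₀ * Δt), |Iφ y - φ y| ≤ 1 / 8 * M * min (Δx * Δt * β₀) (Δx ^ 2))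
    (hl : l ∈ Icc (-β₀) 0) :
    |(φ 0 - (Iφ (0 - Δt * l) + Δt * Lag l)) / Δt - (l * φ' 0 - Lag l)|
      ≤ 9 / 8 * (β₀ + 1) * M * min Δx (Δx ^ 2 / Δt) := by
  have hinterp : min (Δx * Δt * β₀) (Δx ^ 2) ≤ (β₀ + 1) * (Δt * min Δx (Δx ^ 2 / Δt)) :=
    le_add_one_mul_mul_min_div_of_le_min hΔx hΔt hβ₀ (le_of_eq (by ring_nf))
  have htaylor : (β₀ * Δt) ^ 2 ≤ (β₀ + 1) * (Δt * min Δx (Δx ^ 2 / Δt)) :=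
    le_add_one_mul_mul_min_div_of_le_min hΔx hΔt hβ₀
      (le_min (by nlinarith [mul_nonneg hβ₀ hΔt.le]) (by gcongr))
  have hy : 0 - Δt * l ∈ Icc 0 (β₀ * Δt) := ⟨by nlinarith [hl.2], by nlinarith [hl.1]⟩
  have hT := abs_sub_sub_mul_deriv_le_of_abs_deriv2_le hφ hφ' hφ'' hy
  simp only [sub_zero] at hT
  refine abs_div_sub_le_of_abs_add_abs_le (b := φ (0 - Δt * l)) hΔt ?_
  calc _ ≤ 1 / 8 * M * min (Δx * Δt * β₀) (Δx ^ 2) + M * (β₀ * Δt) ^ 2 := by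
        gcongr
        · exact hIφ _ hy
        · exact hT.trans (mul_le_mul_of_nonneg_left (pow_le_pow_left₀ hy.1 hy.2 2) hM)
    _ ≤ 1 / 8 * M * ((β₀ + 1) * (Δt * min Δx (Δx ^ 2 / Δt)))
        + M * ((β₀ + 1) * (Δt * min Δx (Δx ^ 2 / Δt))) := by gcongr
    _ = Δt * (9 / 8 * (β₀ + 1) * M * min Δx (Δx ^ 2 / Δt)) := by ring

theorem setOf_exists_abs_le_eq_image {β R : ℝ} (hβR : β ≤ R) (g : ℝ → ℝ) :
    {y | ∃ l : ℝ, l ∈ Icc (-R) 0 ∧ |l| ≤ β ∧ y = g l} = g '' Icc (-β) 0 := by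
  ext y
  simp only [mem_ofPred_eq, mem_image, mem_Icc, abs_le]
  constructor
  · rintro ⟨l, ⟨-, hl₀⟩, ⟨hlβ, -⟩, rfl⟩
    exact ⟨l, ⟨hlβ, hl₀⟩, rfl⟩
  · rintro ⟨l, ⟨hlβ, hl₀⟩, rfl⟩
    exact ⟨l, ⟨by linarith, hl₀⟩, ⟨hlβ, by linarith⟩, rfl⟩

theorem stmt_12_general (L₀ β₀ : ℝ) (hβ₀ : 0 < β₀) :
    ∃ C₀ > (0 : ℝ), ∀ (Δx Δt M : ℝ) (φ φ' φ'' Iφ : ℝ → ℝ) (Lag : ℝ → ℝ)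
      (Hmval Sval : ℝ),
      0 < Δx → 0 < Δt → 0 ≤ M →
      Δt ≤ Δx / β₀ →
      Δt ≤ L₀ / β₀ →
      (∀ x ∈ Set.Icc (0 : ℝ) L₀, HasDerivWithinAt φ (φ' x) (Set.Icc (0 : ℝ) L₀) x) →
      (∀ x ∈ Set.Icc (0 : ℝ) L₀, HasDerivWithinAt φ' (φ'' x) (Set.Icc (0 : ℝ) L₀) x) →
      (∀ x ∈ Set.Icc (0 : ℝ) L₀, |φ'' x| ≤ M) →
      (∀ y ∈ Set.Icc (0 : ℝ) (β₀ * Δt),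
        |Iφ y - φ y| ≤ (1 / 8) * M * min (Δx * Δt * β₀) (Δx ^ 2)) →
      IsGreatest {y | ∃ l ∈ Set.Icc (-β₀) (0 : ℝ), y = l * φ' 0 - Lag l} Hmval →
      IsLeast {y | ∃ l : ℝ, l ∈ Set.Icc (-(L₀ / Δt)) (0 : ℝ) ∧ |l| ≤ β₀ ∧
        y = Iφ (0 - Δt * l) + Δt * Lag l} Sval →
      |(φ 0 - Sval) / Δt - Hmval| ≤ C₀ * M * min Δx (Δx ^ 2 / Δt) := by
  refine ⟨9 / 8 * (β₀ + 1), by positivity, ?_⟩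
  intro Δx Δt M φ φ' φ'' Iφ Lag Hmval Sval hΔx hΔt hM hΔtx hΔtL hφ hφ' hφ'' hIφ hH hS
  have hβx : β₀ * Δt ≤ Δx := (le_div_iff₀' hβ₀).mp hΔtx
  have hβL : β₀ * Δt ≤ L₀ := (le_div_iff₀' hβ₀).mp hΔtL
  have hsub : Icc 0 (β₀ * Δt) ⊆ Icc 0 L₀ := Icc_subset_Icc_right hβL
  have hstep (l : ℝ) (hl : l ∈ Icc (-β₀) 0) := abs_scheme_quotient_sub_le (Lag := Lag) hΔx.le
    hΔt hβ₀.le hM hβx (fun x hx => (hφ x (hsub hx)).mono hsub)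
    (fun x hx => (hφ' x (hsub hx)).mono hsub) (fun x hx => hφ'' x (hsub hx)) hIφ hl
  rw [setOf_exists_abs_le_eq_image ((le_div_iff₀ hΔt).mpr (by linarith))] at hS
  have hanti : Antitone fun u => (φ 0 - u) / Δt := fun u v huv =>
    div_le_div_of_nonneg_right (by linarith) hΔt.le
  have hS' := hanti.map_isLeast hS
  rw [image_image] at hS'
  have hH' : IsGreatest ((fun l => l * φ' 0 - Lag l) '' Icc (-β₀) 0) Hmval := by
    simpa only [image, eq_comm] using hH
  exact abs_sub_le_of_isGreatest_image hS' hH' hstep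

/-- One-sided consistency estimate for the semi-Lagrangian operator at the
boundary point `s = 0`, with the truncated Hamiltonian `H⁻`. -/
theorem stmt_12 (L₀ β₀ : ℝ) (hL₀ : 0 < L₀) (hβ₀ : 0 < β₀) :
    ∃ C₀ > (0 : ℝ), ∀ (Δx Δt M : ℝ) (φ φ' φ'' Iφ : ℝ → ℝ) (Lag : ℝ → ℝ)
      (Hmval Sval : ℝ),
      0 < Δx → 0 < Δt → 0 ≤ M →
      Δt ≤ Δx / β₀ →
      Δt ≤ L₀ / β₀ →
      (∀ x ∈ Set.Icc (0 : ℝ) L₀, HasDerivWithinAt φ (φ' x) (Set.Icc (0 : ℝ) L₀) x) →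
      (∀ x ∈ Set.Icc (0 : ℝ) L₀, HasDerivWithinAt φ' (φ'' x) (Set.Icc (0 : ℝ) L₀) x) →
      (∀ x ∈ Set.Icc (0 : ℝ) L₀, |φ'' x| ≤ M) →
      (∀ y ∈ Set.Icc (0 : ℝ) (β₀ * Δt),
        |Iφ y - φ y| ≤ (1 / 8) * M * min (Δx * Δt * β₀) (Δx ^ 2)) →
      IsGreatest {y | ∃ l ∈ Set.Icc (-β₀) (0 : ℝ), y = l * φ' 0 - Lag l} Hmval →
      IsLeast {y | ∃ l : ℝ, l ∈ Set.Icc (-(L₀ / Δt)) (0 : ℝ) ∧ |l| ≤ β₀ ∧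
        y = Iφ (0 - Δt * l) + Δt * Lag l} Sval →
      |(φ 0 - Sval) / Δt - Hmval| ≤ C₀ * M * min Δx (Δx ^ 2 / Δt) :=
  stmt_12_general L₀ β₀ hβ₀
end
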